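/- arXiv:0905.0298 — 2 statements merged into one kernel-verified Lean document; each statement's English description precedes it below -/
import Mathlib

section
/- Let P be a finite set of complex numbers with |P| ≥ 2, let I := |Iso⁺(P)|, and let B and C be finite nonempty sets of complex numbers such that the Minkowski sum B + C := {b + c : b ∈ B, c ∈ C} has exactly |B|·|C| points. Then I·S_P(B + C) + |B|·|C| ≥ (I·S_P(B) + |B|)·(I·S_P(C) + |C|). -/
open MeasureTheory

noncomputable section

/-- `Q` is a similar copy of `P`: the image of `P` under an
orientation-preserving similarity `p ↦ z·p + w`, `z ≠ 0`. -/
def SimilarC (P Q : Finset ℂ) : Prop :=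
  ∃ z w : ℂ, z ≠ 0 ∧ (Q : Set ℂ) = (fun p => z * p + w) '' (P : Set ℂ)

/-- `SP P Q` is the number of subsets of `Q` that are similar copies of `P`. -/
def SP (P Q : Finset ℂ) : ℕ :=
  letI := Classical.decPred (SimilarC P)
  (Q.powerset.filter (SimilarC P)).card

/-- `Q` has no `m` points on a line: every collinear subset has at most `m - 1` points. -/
def NoMOnLine (m : ℕ) (Q : Finset ℂ) : Prop :=
  ∀ S ⊆ Q, Collinear ℝ (S : Set ℂ) → S.card ≤ m - 1

/-- `Q` has `m` points on a line. -/
def HasMOnLine (m : ℕ) (Q : Finset ℂ) : Prop :=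
  ∃ S ⊆ Q, S.card = m ∧ Collinear ℝ (S : Set ℂ)

/-- The number of orientation-preserving isometries of `ℂ` mapping `P` onto itself,
i.e. maps `p ↦ u·p + w` with `|u| = 1` fixing `P` setwise. -/
def IsoPlusCard (P : Finset ℂ) : ℕ :=
  {uw : ℂ × ℂ | ‖uw.1‖ = 1 ∧
    (fun p => uw.1 * p + uw.2) '' (P : Set ℂ) = (P : Set ℂ)}.ncard

/-- The index of `A` with respect to the pattern `P`. -/
def indexP (P A : Finset ℂ) : ℝ :=
  Real.log ((IsoPlusCard P : ℝ) * SP P A + A.card) / Real.log A.card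

/-- `SPnm P n m` : the maximum of `SP P Q` over `n`-point sets `Q`
with no `m` points on a line. -/
def SPnm (P : Finset ℂ) (n m : ℕ) : ℕ :=
  sSup {k | ∃ Q : Finset ℂ, Q.card = n ∧ NoMOnLine m Q ∧ SP P Q = k}

/-- `SPn P n` : the maximum of `SP P Q` over all `n`-point sets `Q`. -/
def SPn (P : Finset ℂ) (n : ℕ) : ℕ :=
  sSup {k | ∃ Q : Finset ℂ, Q.card = n ∧ SP P Q = k}

/-- The Minkowski sum `B + C` of two finite sets of complex numbers. -/
def minkSum (B C : Finset ℂ) : Finset ℂ :=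
  letI := Classical.decEq ℂ
  Finset.image₂ (· + ·) B C

/-- `Q` contains four pairwise distinct points forming a parallelogram. -/
def HasParallelogram (Q : Finset ℂ) : Prop :=
  ∃ p₁ ∈ Q, ∃ p₂ ∈ Q, ∃ p₃ ∈ Q, ∃ p₄ ∈ Q,
    p₁ ≠ p₂ ∧ p₁ ≠ p₃ ∧ p₁ ≠ p₄ ∧ p₂ ≠ p₃ ∧ p₂ ≠ p₄ ∧ p₃ ≠ p₄ ∧
    p₂ - p₁ = p₄ - p₃

/-- `Q` is parallelogram-free: no 3 collinear points and no parallelogram. -/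
def ParallelogramFree (Q : Finset ℂ) : Prop :=
  (∀ S ⊆ Q, Collinear ℝ (S : Set ℂ) → S.card ≤ 2) ∧ ¬ HasParallelogram Q

/-- The set `Q(P, A, u, v) = ⋃_{p ∈ P} (u·p + (v·p − p + 1)·A)`. -/
def Qset (P A : Finset ℂ) (u v : ℂ) : Finset ℂ :=
  letI := Classical.decEq ℂ
  P.biUnion fun p => A.image fun a => u * p + (v * p - p + 1) * a

/-- The vertex set of the regular `k`-gon. -/
def Rpoly (k : ℕ) : Finset ℂ :=
  letI := Classical.decEq ℂ
  (Finset.range k).image fun j : ℕ => Complex.exp (2 * Real.pi * Complex.I * (j : ℂ) / (k : ℂ))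

/-- `ω = e^{2πi/3}`. -/
def omega3 : ℂ := Complex.exp (2 * Real.pi * Complex.I / 3)

/-- The vertex set `{1, ω, ω²}` of an equilateral triangle. -/
def triEq : Finset ℂ :=
  letI := Classical.decEq ℂ
  {1, omega3, omega3 ^ 2}

/-!
Encode the maps `p ↦ a * p + b` by pairs `(a, b)` and count those mapping `P` into `Q`: the `|Q|`
constant maps, and for each of the `S_P(Q)` similar copies of `P` in `Q` the `I` similarities
onto it, so there are `I·S_P(Q) + |Q|` of them. Pairs add pointwise, and when the sums `b + c`
are distinct, `(f, g) ↦ f + g` injects maps into `B` times maps into `C` into maps into `B + C`.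
-/

open Pointwise

def affineMapsInto (P Q : Finset ℂ) : Set (ℂ × ℂ) :=
  {ab | ∀ p ∈ P, ab.1 * p + ab.2 ∈ Q}

lemma affine_ext_of_ne {p₁ p₂ a b c d : ℂ} (hne : p₁ ≠ p₂)
    (h₁ : a * p₁ + b = c * p₁ + d) (h₂ : a * p₂ + b = c * p₂ + d) : (a, b) = (c, d) := by
  have hac : a = c := by
    have h : (a - c) * (p₁ - p₂) = 0 := by linear_combination h₁ - h₂
    exact sub_eq_zero.mp ((mul_eq_zero.mp h).resolve_right (sub_ne_zero.mpr hne))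
  subst hac
  rw [add_left_cancel h₁]

lemma affineMapsInto_finite {P : Finset ℂ} (hP : (P : Set ℂ).Nontrivial) (Q : Finset ℂ) :
    (affineMapsInto P Q).Finite := by
  obtain ⟨p₁, hp₁, p₂, hp₂, hne⟩ := hP
  let eval : ℂ × ℂ → ℂ × ℂ := fun ab => (ab.1 * p₁ + ab.2, ab.1 * p₂ + ab.2)
  have heval : Function.Injective eval := fun ab cd h =>
    affine_ext_of_ne hne (congrArg Prod.fst h) (congrArg Prod.snd h)
  refine ((Q ×ˢ Q : Finset (ℂ × ℂ)).finite_toSet.preimage heval.injOn).subset ?_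
  intro ab hab
  simp only [Set.mem_preimage, Finset.coe_product, Set.mem_prod, Finset.mem_coe]
  exact ⟨hab p₁ hp₁, hab p₂ hp₂⟩

lemma diam_image_affine (s : Set ℂ) (u v : ℂ) :
    Metric.diam ((fun p => u * p + v) '' s) = ‖u‖ * Metric.diam s := by
  have himage : (fun p => u * p + v) '' s = v +ᵥ u • s := by
    rw [← Set.image_smul, ← Set.image_vadd, Set.image_image]
    simp [add_comm]
  rw [himage, diam_vadd, diam_smul₀]

lemma norm_eq_one_of_image_eq_self {P : Finset ℂ} (hP : (P : Set ℂ).Nontrivial) {u v : ℂ}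
    (h : (fun p => u * p + v) '' (P : Set ℂ) = P) : ‖u‖ = 1 := by
  have hdiam : 0 < Metric.diam (P : Set ℂ) := Metric.diam_pos hP P.finite_toSet.isBounded
  have := diam_image_affine (P : Set ℂ) u v
  rw [h] at this
  nlinarith

/-- The similarities onto `z • P + w` are exactly the maps `z • g + w` with `g ∈ Iso⁺(P)`. -/
lemma ncard_similarities_onto {P P' : Finset ℂ} (hP : (P : Set ℂ).Nontrivial)
    (hsim : SimilarC P P') :
    {ab : ℂ × ℂ | ab.1 ≠ 0 ∧ (fun p => ab.1 * p + ab.2) '' (P : Set ℂ) = P'}.ncard =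
      IsoPlusCard P := by
  obtain ⟨z, w, hz, hP'⟩ := hsim
  let compose : ℂ × ℂ → ℂ × ℂ := fun uv => (z * uv.1, z * uv.2 + w)
  have hg : Function.Injective fun q : ℂ => z * q + w := fun a b hab => by simpa [hz] using hab
  have hcompose : ∀ uv : ℂ × ℂ, (fun p => (compose uv).1 * p + (compose uv).2) =
      (fun q => z * q + w) ∘ fun p => uv.1 * p + uv.2 := fun uv => by
    funext p; simp only [compose, Function.comp_apply]; ring
  have hfiber : {ab : ℂ × ℂ | ab.1 ≠ 0 ∧ (fun p => ab.1 * p + ab.2) '' (P : Set ℂ) = P'} =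
      compose '' {uv : ℂ × ℂ | ‖uv.1‖ = 1 ∧
        (fun p => uv.1 * p + uv.2) '' (P : Set ℂ) = (P : Set ℂ)} := by
    ext ab
    constructor
    · obtain ⟨a, b⟩ := ab
      rintro ⟨ha, himage⟩
      have hab : compose (a / z, (b - w) / z) = (a, b) :=
        Prod.ext (mul_div_cancel₀ a hz) (by simp only [compose, mul_div_cancel₀ _ hz, sub_add_cancel])
      have hself : (fun p => a / z * p + (b - w) / z) '' (P : Set ℂ) = P := by
        apply hg.image_injective
        rw [Set.image_image, ← hP', ← himage]
        congr 1; funext p; field_simp; ring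
      exact ⟨_, ⟨norm_eq_one_of_image_eq_self hP hself, hself⟩, hab⟩
    · rintro ⟨uv, ⟨hu, hself⟩, rfl⟩
      refine ⟨mul_ne_zero hz (norm_ne_zero_iff.mp (by rw [hu]; exact one_ne_zero)), ?_⟩
      rw [hcompose, Set.image_comp, hself, hP']
  rw [hfiber, Set.ncard_image_of_injective]
  · rfl
  · rintro ⟨a, b⟩ ⟨c, d⟩ h
    simp only [compose, Prod.mk.injEq] at h
    obtain ⟨h₁, h₂⟩ := h
    simp only [Prod.mk.injEq]
    exact ⟨mul_left_cancel₀ hz h₁, mul_left_cancel₀ hz (add_right_cancel h₂)⟩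

lemma ncard_affineMapsInto_inter_const {P : Finset ℂ} (hP : P.Nonempty) (Q : Finset ℂ) :
    (affineMapsInto P Q ∩ {ab | ab.1 = 0}).ncard = Q.card := by
  obtain ⟨p, hp⟩ := hP
  have hconst : affineMapsInto P Q ∩ {ab | ab.1 = 0} = (fun w => ((0 : ℂ), w)) '' Q := by
    ext ⟨a, b⟩
    simp only [affineMapsInto, Set.mem_inter_iff, Set.mem_ofPred_eq, Set.mem_image,
      Finset.mem_coe, Prod.mk.injEq]
    constructor
    · rintro ⟨hab, rfl⟩
      exact ⟨b, by simpa using hab p hp, rfl, rfl⟩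
    · rintro ⟨b, hb, rfl, rfl⟩
      exact ⟨fun _ _ => by simpa using hb, rfl⟩
  rw [hconst, Set.ncard_image_of_injective _ (Prod.mk_right_injective 0), Set.ncard_coe_finset]

lemma ncard_affineMapsInto_diff_const {P : Finset ℂ} (hP : (P : Set ℂ).Nontrivial)
    (Q : Finset ℂ) :
    (affineMapsInto P Q \ {ab | ab.1 = 0}).ncard = IsoPlusCard P * SP P Q := by
  classical
  have hfin := (affineMapsInto_finite hP Q).sdiff (t := {ab | ab.1 = 0})
  let image : ℂ × ℂ → Finset ℂ := fun ab => P.image fun p => ab.1 * p + ab.2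
  have hmaps : ∀ ab ∈ hfin.toFinset, image ab ∈ Q.powerset.filter (SimilarC P) := by
    intro ab hab
    rw [Set.Finite.mem_toFinset] at hab
    obtain ⟨hinto, hnonconst⟩ := hab
    simp only [Finset.mem_filter, Finset.mem_powerset]
    exact ⟨Finset.image_subset_iff.mpr hinto, ab.1, ab.2, hnonconst, by rw [Finset.coe_image]⟩
  rw [Set.ncard_eq_toFinset_card _ hfin, Finset.card_eq_sum_card_fiberwise hmaps, SP, mul_comm,
    ← smul_eq_mul, ← Finset.sum_const]
  refine Finset.sum_congr (by congr) fun P' hP' => ?_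
  rw [Finset.mem_filter, Finset.mem_powerset] at hP'
  rw [← ncard_similarities_onto hP hP'.2, ← Set.ncard_coe_finset]
  congr 1
  ext ab
  simp only [Finset.coe_filter, Set.Finite.mem_toFinset, Set.mem_ofPred_eq, Set.mem_sdiff,
    affineMapsInto, image, ← Finset.coe_inj, Finset.coe_image]
  constructor
  · rintro ⟨⟨_, hnonconst⟩, himage⟩
    exact ⟨hnonconst, himage⟩
  · rintro ⟨hnonconst, himage⟩
    refine ⟨⟨fun p hp => hP'.1 ?_, hnonconst⟩, himage⟩
    rw [← Finset.mem_coe, ← himage]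
    exact Set.mem_image_of_mem _ hp

theorem ncard_affineMapsInto {P : Finset ℂ} (hP : (P : Set ℂ).Nontrivial) (Q : Finset ℂ) :
    (affineMapsInto P Q).ncard = IsoPlusCard P * SP P Q + Q.card := by
  rw [← Set.ncard_inter_add_ncard_sdiff_eq_ncard _ {ab | ab.1 = 0} (affineMapsInto_finite hP Q),
    ncard_affineMapsInto_inter_const (Finset.coe_nonempty.mp hP.nonempty),
    ncard_affineMapsInto_diff_const hP, add_comm]

lemma add_mem_affineMapsInto_minkSum {P B C : Finset ℂ} {f g : ℂ × ℂ}
    (hf : f ∈ affineMapsInto P B) (hg : g ∈ affineMapsInto P C) :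
    f + g ∈ affineMapsInto P (minkSum B C) := fun p hp => by
  have h : (f + g).1 * p + (f + g).2 = (f.1 * p + f.2) + (g.1 * p + g.2) := by
    simp only [Prod.fst_add, Prod.snd_add]; ring
  rw [h, minkSum]
  exact Finset.mem_image₂_of_mem (hf p hp) (hg p hp)

lemma add_injOn_affineMapsInto {P B C : Finset ℂ} (hP : (P : Set ℂ).Nontrivial)
    (hBC : Set.InjOn (fun x : ℂ × ℂ => x.1 + x.2) ((B : Set ℂ) ×ˢ (C : Set ℂ))) :
    Set.InjOn (fun fg : (ℂ × ℂ) × (ℂ × ℂ) => fg.1 + fg.2)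
      (affineMapsInto P B ×ˢ affineMapsInto P C) := by
  rintro ⟨f, g⟩ ⟨hf, hg⟩ ⟨f', g'⟩ ⟨hf', hg'⟩ hsum
  have hvalues : ∀ p ∈ P, f.1 * p + f.2 = f'.1 * p + f'.2 ∧ g.1 * p + g.2 = g'.1 * p + g'.2 := by
    intro p hp
    have h := hBC (Set.mk_mem_prod (hf p hp) (hg p hp)) (Set.mk_mem_prod (hf' p hp) (hg' p hp))
      (by simp only [Prod.ext_iff, Prod.fst_add, Prod.snd_add] at hsum ⊢
          linear_combination p * hsum.1 + hsum.2)
    exact Prod.mk.inj h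
  obtain ⟨p₁, hp₁, p₂, hp₂, hne⟩ := hP
  simp only [Prod.mk.injEq]
  exact ⟨affine_ext_of_ne hne (hvalues p₁ hp₁).1 (hvalues p₂ hp₂).1,
    affine_ext_of_ne hne (hvalues p₁ hp₁).2 (hvalues p₂ hp₂).2⟩

theorem stmt1_general (P B C : Finset ℂ) (hP : 2 ≤ P.card)
    (hcard : (minkSum B C).card = B.card * C.card) :
    (IsoPlusCard P * SP P B + B.card) * (IsoPlusCard P * SP P C + C.card) ≤
      IsoPlusCard P * SP P (minkSum B C) + B.card * C.card := by
  have hP' : (P : Set ℂ).Nontrivial := Finset.one_lt_card_iff_nontrivial.mp hP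
  have hBC : Set.InjOn (fun x : ℂ × ℂ => x.1 + x.2) ((B : Set ℂ) ×ˢ (C : Set ℂ)) := by
    rw [minkSum] at hcard
    exact Finset.card_image₂_iff.mp hcard
  rw [← ncard_affineMapsInto hP', ← ncard_affineMapsInto hP', ← hcard,
    ← ncard_affineMapsInto hP', ← Set.ncard_prod]
  exact Set.ncard_le_ncard_of_injOn _ (fun fg hfg => add_mem_affineMapsInto_minkSum hfg.1 hfg.2)
    (add_injOn_affineMapsInto hP' hBC) (affineMapsInto_finite hP' _)

/-- Lemma on Minkowski sums: if `B + C` has exactly `|B|·|C|` points, then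
`I·S_P(B + C) + |B|·|C| ≥ (I·S_P(B) + |B|)·(I·S_P(C) + |C|)`. -/
theorem stmt1 (P B C : Finset ℂ) (hP : 2 ≤ P.card)
    (hB : B.Nonempty) (hC : C.Nonempty)
    (hcard : (minkSum B C).card = B.card * C.card) :
    (IsoPlusCard P * SP P B + B.card) * (IsoPlusCard P * SP P C + C.card) ≤
      IsoPlusCard P * SP P (minkSum B C) + B.card * C.card :=
  stmt1_general P B C hP hcard
end
end

section
/- Let △ = {1, ω, ω²} ⊆ ℂ, where ω = e^{2πi/3}. There exists a finite set A ⊆ ℂ with exactly 15 points, no 3 of which are collinear, such that S_△(A) ≥ 29. -/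
open MeasureTheory

noncomputable section

/-!
Work in the Eisenstein lattice, coordinatised by `(a, b) ↦ a + b ω`. For `x ≠ y` the triple
`{x, y, x + (1 + ω)(y - x)}` is the image of `{1, ω, ω²}` under the similarity sending `1 ↦ x`
and `ω ↦ y`, because `ω² - 1 = (ω - 1)(ω + 1)`; in coordinates, multiplication by `1 + ω` is an
integer map. Three lattice points `p, q, r` are collinear only if `det(q - p, r - p) = 0`, since
`im (conj u * v) = det(u, v) · im ω`. What remains is a finite computation: 15 lattice points
with no vanishing determinant and 29 distinct such triangles among them.
-/

open ComplexConjugate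

theorem card_le_two_of_forall_not_collinear {k V : Type*} [DivisionRing k] [AddCommGroup V]
    [Module k V] {A : Finset V}
    (hA : ∀ x ∈ A, ∀ y ∈ A, ∀ z ∈ A, x ≠ y → x ≠ z → y ≠ z →
      ¬ Collinear k ({x, y, z} : Set V)) :
    ∀ S ⊆ A, Collinear k (S : Set V) → S.card ≤ 2 := by
  intro S hS hcol
  by_contra! hcard
  obtain ⟨x, y, z, hx, hy, hz, hxy, hxz, hyz⟩ := Finset.two_lt_card_iff.mp hcard
  refine hA x (hS hx) y (hS hy) z (hS hz) hxy hxz hyz (hcol.subset ?_)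
  simp [Set.insert_subset_iff, hx, hy, hz]

theorem Complex.im_conj_sub_mul_sub_eq_zero_of_collinear {x y z : ℂ}
    (h : Collinear ℝ ({x, y, z} : Set ℂ)) : (conj (y - x) * (z - x)).im = 0 := by
  obtain ⟨v, hv⟩ := (collinear_iff_of_mem (Set.mem_insert x _)).mp h
  obtain ⟨s, rfl⟩ := hv y (by simp)
  obtain ⟨t, rfl⟩ := hv z (by simp)
  simp only [vadd_eq_add, add_sub_cancel_right, Complex.real_smul, map_mul, Complex.conj_ofReal,
    Complex.mul_im, Complex.mul_re, Complex.ofReal_re, Complex.ofReal_im, Complex.conj_re,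
    Complex.conj_im]
  ring

theorem Complex.im_conj_mul_of_real_combination (w : ℂ) (a b c d : ℝ) :
    (conj (a + b * w) * (c + d * w)).im = (a * d - b * c) * w.im := by
  simp only [map_add, map_mul, Complex.conj_ofReal, Complex.mul_im, Complex.add_im,
    Complex.add_re, Complex.mul_re, Complex.ofReal_re, Complex.ofReal_im, Complex.conj_re,
    Complex.conj_im]
  ring

theorem Complex.im_ne_zero_of_sq_add_self_add_one {w : ℂ} (hw : w ^ 2 + w + 1 = 0) :
    w.im ≠ 0 := by
  intro him
  have hre := congrArg Complex.re hw
  simp only [pow_two, Complex.add_re, Complex.mul_re, him, Complex.one_re, Complex.zero_re] at hre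
  nlinarith [sq_nonneg (w.re + 1 / 2)]

theorem omega3_sq_add_self_add_one : omega3 ^ 2 + omega3 + 1 = 0 := by
  have h := (Complex.isPrimitiveRoot_exp 3 (by norm_num)).geom_sum_eq_zero (by norm_num)
  simp only [Finset.sum_range_succ, Finset.sum_range_zero, pow_zero, pow_one, zero_add,
    Nat.cast_ofNat] at h
  rw [omega3]
  linear_combination h

theorem omega3_im_ne_zero : omega3.im ≠ 0 :=
  Complex.im_ne_zero_of_sq_add_self_add_one omega3_sq_add_self_add_one

theorem similarC_triEq {x y : ℂ} (hxy : x ≠ y) :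
    SimilarC triEq {x, y, x + (1 + omega3) * (y - x)} := by
  have hω : omega3 - 1 ≠ 0 := by
    intro h
    apply omega3_im_ne_zero
    simp [sub_eq_zero.mp h]
  obtain ⟨z, hz, hz_mul⟩ : ∃ z, z ≠ 0 ∧ z * (omega3 - 1) = y - x :=
    ⟨_, div_ne_zero (sub_ne_zero.mpr hxy.symm) hω, div_mul_cancel₀ _ hω⟩
  refine ⟨z, x - z, hz, ?_⟩
  simp only [triEq, Finset.coe_insert, Finset.coe_singleton, Set.image_insert_eq,
    Set.image_singleton]
  congr 2
  · ring
  · linear_combination -hz_mul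
  · congr 1
    linear_combination -(omega3 + 1) * hz_mul

theorem card_le_SP {P A : Finset ℂ} {T : Finset (Finset ℂ)}
    (hT : ∀ t ∈ T, t ⊆ A ∧ SimilarC P t) : T.card ≤ SP P A := by
  classical
  unfold SP
  refine Finset.card_le_card fun t ht => ?_
  rw [Finset.mem_filter, Finset.mem_powerset]
  exact hT t ht

namespace Eisenstein

def eis (p : ℤ × ℤ) : ℂ := p.1 + p.2 * omega3

def cross (u v : ℤ × ℤ) : ℤ := u.1 * v.2 - u.2 * v.1

/-- Multiplication by `1 + ω = e^{iπ/3}` in the basis `1, ω`. -/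
def rot60 (v : ℤ × ℤ) : ℤ × ℤ := (v.1 - v.2, v.1)

def apex (p q : ℤ × ℤ) : ℤ × ℤ := p + rot60 (q - p)

theorem eis_sub (p q : ℤ × ℤ) : eis (p - q) = eis p - eis q := by
  simp only [eis, Prod.fst_sub, Prod.snd_sub, Int.cast_sub]
  ring

theorem eis_add (p q : ℤ × ℤ) : eis (p + q) = eis p + eis q := by
  simp only [eis, Prod.fst_add, Prod.snd_add, Int.cast_add]
  ring

theorem eis_rot60 (v : ℤ × ℤ) : eis (rot60 v) = (1 + omega3) * eis v := by
  simp only [eis, rot60, Int.cast_sub]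
  linear_combination -(v.2 : ℂ) * omega3_sq_add_self_add_one

theorem eis_apex (p q : ℤ × ℤ) : eis (apex p q) = eis p + (1 + omega3) * (eis q - eis p) := by
  rw [apex, eis_add, eis_rot60, eis_sub]

theorem eis_injective : Function.Injective eis := by
  intro p q h
  have him := congrArg Complex.im h
  have hre := congrArg Complex.re h
  simp only [eis, Complex.add_im, Complex.add_re, Complex.mul_im, Complex.mul_re,
    Complex.intCast_re, Complex.intCast_im, zero_mul, add_zero, zero_add, sub_zero] at him hre
  have h2 : p.2 = q.2 := by exact_mod_cast mul_right_cancel₀ omega3_im_ne_zero him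
  rw [h2] at hre
  exact Prod.ext (by exact_mod_cast add_right_cancel hre) h2

theorem not_collinear_of_cross_ne_zero {p q r : ℤ × ℤ} (h : cross (q - p) (r - p) ≠ 0) :
    ¬ Collinear ℝ ({eis p, eis q, eis r} : Set ℂ) := by
  intro hcol
  have him := Complex.im_conj_sub_mul_sub_eq_zero_of_collinear hcol
  rw [← eis_sub, ← eis_sub, eis, eis] at him
  have key :=
    Complex.im_conj_mul_of_real_combination omega3 (q - p).1 (q - p).2 (r - p).1 (r - p).2
  simp only [Complex.ofReal_intCast] at key
  rw [key] at him
  refine h ?_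
  have := (mul_eq_zero.mp him).resolve_right omega3_im_ne_zero
  exact_mod_cast this

theorem similarC_triEq_image_eis {p q : ℤ × ℤ} (hpq : p ≠ q) :
    SimilarC triEq (({p, q, apex p q} : Finset (ℤ × ℤ)).image eis) := by
  simp only [Finset.image_insert, Finset.image_singleton, eis_apex]
  exact similarC_triEq (eis_injective.ne hpq)

def config : Finset (ℤ × ℤ) :=
  {(-3, -4), (3, 1), (2, -1), (1, 0), (-2, -2), (-2, 2), (-4, -3), (-1, 1), (-1, -5), (-3, -1),
   (4, 4), (0, -2), (-5, 0), (1, 2), (0, 3)}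

def triangleBases : Finset ((ℤ × ℤ) × (ℤ × ℤ)) :=
  {((-3, -4), (3, 1)), ((-3, -4), (2, -1)), ((-3, -4), (-2, -2)), ((-3, -4), (-1, -5)),
   ((-3, -4), (1, 2)), ((3, 1), (1, 0)), ((3, 1), (0, 3)), ((3, 1), (-3, -1)), ((3, 1), (4, 4)),
   ((2, -1), (1, 0)), ((2, -1), (-2, -2)), ((2, -1), (1, 2)), ((2, -1), (0, 3)),
   ((2, -1), (4, 4)), ((1, 0), (-1, 1)), ((1, 0), (-2, 2)), ((1, 0), (-4, -3)),
   ((1, 0), (0, 3)), ((1, 0), (4, 4)), ((-2, -2), (-3, -1)), ((-2, -2), (0, 3)),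
   ((-2, 2), (-1, 1)), ((-2, 2), (-5, 0)), ((-2, 2), (0, -2)), ((-4, -3), (0, -2)),
   ((-4, -3), (-1, 1)), ((-1, 1), (1, 2)), ((-1, -5), (4, 4)), ((-3, -1), (0, -2))}

def configTriangles : Finset (Finset (ℤ × ℤ)) :=
  triangleBases.image fun u => {u.1, u.2, apex u.1 u.2}

theorem config_card : config.card = 15 := by decide

theorem configTriangles_card : configTriangles.card = 29 := by decide

theorem triangleBases_spec :
    ∀ u ∈ triangleBases, u.1 ∈ config ∧ u.2 ∈ config ∧ apex u.1 u.2 ∈ config ∧ u.1 ≠ u.2 := by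
  decide

theorem config_cross_ne_zero : ∀ p ∈ config, ∀ q ∈ config, ∀ r ∈ config,
    p ≠ q → p ≠ r → q ≠ r → cross (q - p) (r - p) ≠ 0 := by
  decide

theorem card_le_two_of_collinear_subset_image_eis_config :
    ∀ S ⊆ config.image eis, Collinear ℝ (S : Set ℂ) → S.card ≤ 2 := by
  refine card_le_two_of_forall_not_collinear ?_
  simp only [Finset.mem_image]
  rintro _ ⟨p, hp, rfl⟩ _ ⟨q, hq, rfl⟩ _ ⟨r, hr, rfl⟩ hpq hpr hqr
  exact not_collinear_of_cross_ne_zero <| config_cross_ne_zero p hp q hq r hr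
    (ne_of_apply_ne eis hpq) (ne_of_apply_ne eis hpr) (ne_of_apply_ne eis hqr)

theorem card_image_eis_config : (config.image eis).card = 15 := by
  rw [Finset.card_image_of_injective _ eis_injective, config_card]

theorem le_SP_triEq_image_eis_config : 29 ≤ SP triEq (config.image eis) := by
  calc 29 = (configTriangles.image (Finset.image eis)).card := by
        rw [Finset.card_image_of_injective _ (Finset.image_injective eis_injective),
          configTriangles_card]
    _ ≤ SP triEq (config.image eis) := by
        refine card_le_SP ?_
        simp only [configTriangles, Finset.mem_image]
        rintro _ ⟨_, ⟨u, hu, rfl⟩, rfl⟩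
        obtain ⟨h₁, h₂, h₃, hne⟩ := triangleBases_spec u hu
        refine ⟨Finset.image_subset_image ?_, similarC_triEq_image_eis hne⟩
        simp [Finset.insert_subset_iff, h₁, h₂, h₃]

end Eisenstein

/-- There is a 15-point set in general position containing at least 29 equilateral
triangles `{1, ω, ω²}` up to similarity. -/
theorem stmt10 :
    ∃ A : Finset ℂ, A.card = 15 ∧ (∀ S ⊆ A, Collinear ℝ (S : Set ℂ) → S.card ≤ 2) ∧
      29 ≤ SP triEq A :=
  ⟨_, Eisenstein.card_image_eis_config,
    Eisenstein.card_le_two_of_collinear_subset_image_eis_config,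
    Eisenstein.le_SP_triEq_image_eis_config⟩
end
end
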